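/- arXiv:1807.03271 — 8 statements merged into one kernel-verified Lean document; each statement's English description precedes it below -/
import Mathlib

section
/- The number of m-Dyck paths from (0,0) to ((m+1)n, 0) equals the Fuss–Catalan number C_n^{(m+1)} = (1/(mn+1))·binom((m+1)n, n). -/
/-!
Prepending a rise turns an `m`-Dyck path of length `L = (m+1)n` into a sequence of `L + 1`
steps `1` and `-m` with sum `1` all of whose nonempty prefix sums are positive. By Raney's cycle
lemma, exactly one cyclic rotation of any integer sequence with sum `1` has this property, so
these sequences are a `1/(L+1)` fraction of all sequences of `L + 1` steps with sum `1`, that is,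
with exactly `n` falls. Hence the count is `binom(L+1, n)/(L+1) = binom(L, n)/(mn+1)`.
-/

/-- An `m`-Dyck path, encoded as its list of steps: each step is `1` (rise) or
`-m` (`m`-fall), all partial sums are nonnegative, and the total sum is `0`. -/
def IsMDyckPath (m : ℕ) (l : List ℤ) : Prop :=
  (∀ s ∈ l, s = 1 ∨ s = -(m : ℤ)) ∧ (∀ k : ℕ, 0 ≤ (l.take k).sum) ∧ l.sum = 0

namespace List

/-- Prefix sums of the periodic extension of `l`; prefix sums of rotations of `l` are
differences of its values (`sum_take_rotate`). -/
def cyclicPrefixSum (l : List ℤ) (k : ℕ) : ℤ := ∑ i ∈ Finset.range k, l.getD (i % l.length) 0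

variable {l : List ℤ} {a c k : ℕ}

lemma cyclicPrefixSum_of_le (hk : k ≤ l.length) : l.cyclicPrefixSum k = (l.take k).sum := by
  induction k with
  | zero => simp [cyclicPrefixSum]
  | succ k ih =>
    rw [cyclicPrefixSum, Finset.sum_range_succ, ← cyclicPrefixSum, ih (by omega),
      sum_take_succ _ _ hk, Nat.mod_eq_of_lt hk, getD_eq_getElem _ _ hk]

lemma cyclicPrefixSum_length_add (l : List ℤ) (k : ℕ) :
    l.cyclicPrefixSum (l.length + k) = l.sum + l.cyclicPrefixSum k := by
  rw [cyclicPrefixSum, Finset.sum_range_add, ← cyclicPrefixSum, cyclicPrefixSum_of_le le_rfl,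
    take_length]
  simp [cyclicPrefixSum]

lemma sum_take_rotate (hk : k ≤ l.length) :
    ((l.rotate a).take k).sum = l.cyclicPrefixSum (a + k) - l.cyclicPrefixSum a := by
  rw [← cyclicPrefixSum_of_le (by rwa [length_rotate]), cyclicPrefixSum.eq_1 l (a + k),
    Finset.sum_range_add, ← cyclicPrefixSum.eq_1 l a, add_sub_cancel_left, cyclicPrefixSum]
  refine Finset.sum_congr rfl fun i _ => ?_
  rcases eq_or_ne l [] with rfl | hl
  · simp
  have hN := length_pos_iff.mpr hl
  rw [getD_eq_getElem?_getD, getD_eq_getElem?_getD, length_rotate,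
    getElem?_rotate (Nat.mod_lt _ hN), Nat.mod_add_mod, Nat.add_comm]

def PrefixSumsPos (l : List ℤ) : Prop := ∀ k < l.length, 0 < (l.take (k + 1)).sum

lemma prefixSumsPos_cons_iff {x : ℤ} :
    (x :: l).PrefixSumsPos ↔ ∀ k ≤ l.length, 0 < x + (l.take k).sum := by
  simp [PrefixSumsPos]

lemma prefixSumsPos_rotate_iff :
    (l.rotate a).PrefixSumsPos ↔
      ∀ k < l.length, l.cyclicPrefixSum a < l.cyclicPrefixSum (a + (k + 1)) := by
  simp only [PrefixSumsPos, length_rotate]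
  refine forall₂_congr fun k hk => ?_
  rw [sum_take_rotate hk, sub_pos]

theorem exists_prefixSumsPos_rotate (hs : l.sum = 1) :
    ∃ j < l.length, (l.rotate j).PrefixSumsPos := by
  have hN : 0 < l.length := length_pos_iff.mpr (by rintro rfl; simp at hs)
  -- rotate to the last index at which the prefix sums attain their minimum
  obtain ⟨j, hj, hmin⟩ := Finset.exists_min_image (Finset.range l.length)
    (fun i => toLex (l.cyclicPrefixSum i, -(i : ℤ))) ⟨0, Finset.mem_range.mpr hN⟩
  simp only [Finset.mem_range, Prod.Lex.le_iff, ofLex_toLex] at hj hmin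
  refine ⟨j, hj, prefixSumsPos_rotate_iff.mpr fun k hk => ?_⟩
  rcases lt_or_ge (j + (k + 1)) l.length with hjk | hjk
  · have := hmin _ hjk
    omega
  · obtain ⟨i, hi⟩ := Nat.exists_eq_add_of_le hjk
    have := hmin i (by omega)
    rw [hi, cyclicPrefixSum_length_add, hs]
    omega

theorem eq_of_prefixSumsPos_rotate (hs : l.sum = 1) (ha : a < l.length) (hc : c < l.length)
    (hpa : (l.rotate a).PrefixSumsPos) (hpc : (l.rotate c).PrefixSumsPos) : a = c := by
  wlog hac : a < c generalizing a c
  · rcases (not_lt.mp hac).lt_or_eq with h | h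
    · exact (this hc ha hpc hpa h).symm
    · exact h.symm
  have h₁ := prefixSumsPos_rotate_iff.mp hpa (c - a - 1) (by omega)
  have h₂ := prefixSumsPos_rotate_iff.mp hpc (a + l.length - c - 1) (by omega)
  rw [show a + (c - a - 1 + 1) = c by omega] at h₁
  rw [show c + (a + l.length - c - 1 + 1) = l.length + a by omega,
    cyclicPrefixSum_length_add, hs] at h₂
  omega

lemma rotate_rotate_eq_self {α : Type*} {l : List α} {i j : ℕ} (h : i + j = l.length) :
    (l.rotate i).rotate j = l := by
  rw [rotate_rotate, h, rotate_length]

end List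

section CycleLemma

variable (A : Set ℤ) (N : ℕ)

def SumOneList : Type := {l : List ℤ // l.length = N ∧ (∀ s ∈ l, s ∈ A) ∧ l.sum = 1}

variable {A N}

def SumOneList.rotate (l : SumOneList A N) (j : ℕ) : SumOneList A N :=
  ⟨l.1.rotate j, by
    obtain ⟨hl, hA, hs⟩ := l.2
    exact ⟨by rw [List.length_rotate, hl], fun s hs => hA s (List.mem_rotate.mp hs),
      by rw [(List.rotate_perm _ _).sum_eq, hs]⟩⟩

lemma SumOneList.rotate_rotate_eq_self (l : SumOneList A N) {i j : ℕ} (h : i + j = N) :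
    (l.rotate i).rotate j = l :=
  Subtype.ext <| List.rotate_rotate_eq_self (h.trans l.2.1.symm)

variable (A N)

/-- Double counting of the pairs `(l, j)` such that `l.rotate j` has positive prefix sums:
each `l` has exactly one such `j`, and `(l, j) ↦ (l.rotate j, j)` is a bijection onto
the pairs of a list with positive prefix sums and an index. -/
theorem card_sumOneList :
    Nat.card (SumOneList A N) = N * Nat.card {l : SumOneList A N // l.1.PrefixSumsPos} := by
  let GoodRotation := {p : SumOneList A N × Fin N // (p.1.rotate p.2).1.PrefixSumsPos}
  have hproj : Nat.card GoodRotation = Nat.card (SumOneList A N) := by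
    refine Nat.card_eq_of_bijective (fun p => p.1.1) ⟨?_, fun l => ?_⟩
    · rintro ⟨⟨l, i⟩, hi⟩ ⟨⟨l', i'⟩, hi'⟩ (rfl : l = l')
      obtain ⟨hN, -, hs⟩ := l.2
      have : i = i' := Fin.ext <|
        List.eq_of_prefixSumsPos_rotate hs (i.2.trans_eq hN.symm) (i'.2.trans_eq hN.symm) hi hi'
      subst this
      rfl
    · obtain ⟨hN, -, hs⟩ := l.2
      obtain ⟨j, hj, hpos⟩ := List.exists_prefixSumsPos_rotate hs
      exact ⟨⟨⟨l, ⟨j, hN ▸ hj⟩⟩, hpos⟩, rfl⟩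
  let e : GoodRotation ≃ {l : SumOneList A N // l.1.PrefixSumsPos} × Fin N :=
    { toFun p := (⟨p.1.1.rotate p.1.2, p.2⟩, p.1.2)
      invFun q := ⟨(q.1.1.rotate (N - q.2), q.2), by
        rw [SumOneList.rotate_rotate_eq_self _ (Nat.sub_add_cancel q.2.2.le)]; exact q.1.2⟩
      left_inv p := by
        ext
        · exact p.1.1.rotate_rotate_eq_self (Nat.add_sub_cancel' p.1.2.2.le)
        · rfl
      right_inv q := by
        ext
        · exact q.1.1.rotate_rotate_eq_self (Nat.sub_add_cancel q.2.2.le)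
        · rfl }
  rw [← hproj, Nat.card_congr e, Nat.card_prod, Nat.card_fin, mul_comm]

end CycleLemma

section FallPositions

variable (m : ℕ) {N : ℕ}

def fallsAt (s : Finset (Fin N)) : List ℤ := List.ofFn fun i => if i ∈ s then -(m : ℤ) else 1

lemma sum_fallsAt (s : Finset (Fin N)) : (fallsAt m s).sum = N - (m + 1) * s.card := by
  have h : ∀ i, (if i ∈ s then -(m : ℤ) else 1) = 1 - (m + 1) * if i ∈ s then 1 else 0 := by
    intro i; split_ifs <;> ring
  simp only [fallsAt, List.sum_ofFn, h, Finset.sum_sub_distrib, ← Finset.mul_sum,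
    Finset.sum_boole, Finset.filter_mem_eq_inter, Finset.univ_inter]
  simp

lemma fallsAt_injective : Function.Injective (fallsAt m (N := N)) := by
  intro s t hst
  ext i
  have h := congrFun (List.ofFn_injective hst) i
  by_cases hs : i ∈ s <;> by_cases ht : i ∈ t <;> simp only [hs, ht, if_true, if_false] at h ⊢
  all_goals omega

lemma exists_fallsAt_eq {l : List ℤ} (hl : l.length = N)
    (hA : ∀ x ∈ l, x ∈ ({1, -(m : ℤ)} : Set ℤ)) : ∃ s : Finset (Fin N), fallsAt m s = l := by
  refine ⟨Finset.univ.filter fun i => l.getD i 0 ≠ 1,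
    List.ext_getElem (by simp [fallsAt, hl]) fun i _ hi => ?_⟩
  simp only [fallsAt, List.getElem_ofFn, Finset.mem_filter, Finset.mem_univ, true_and,
    List.getD_eq_getElem _ _ hi]
  rcases hA _ (List.getElem_mem hi) with h | h <;> simp_all

end FallPositions

theorem card_sumOneList_riseFall (m n : ℕ) :
    Nat.card (SumOneList {1, -(m : ℤ)} ((m + 1) * n + 1)) = ((m + 1) * n + 1).choose n := by
  set N := (m + 1) * n + 1 with hN
  have hsum (s : Finset (Fin N)) : (fallsAt m s).sum = 1 ↔ s.card = n := by
    have hNz : (N : ℤ) = (m + 1) * n + 1 := by push_cast [hN]; ring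
    rw [sum_fallsAt, hNz]
    constructor
    · intro h
      have : ((m : ℤ) + 1) * s.card = (m + 1) * n := by linarith
      exact_mod_cast mul_left_cancel₀ (by positivity) this
    · intro h
      rw [h]
      ring
  have hsteps (s : Finset (Fin N)) : ∀ x ∈ fallsAt m s, x ∈ ({1, -(m : ℤ)} : Set ℤ) :=
    List.forall_mem_ofFn_iff.mpr fun i => by split_ifs <;> simp
  refine (Nat.card_eq_of_bijective
    (fun s : {s : Finset (Fin N) // s.card = n} =>
      (⟨fallsAt m s.1, List.length_ofFn, hsteps s.1, (hsum s.1).mpr s.2⟩ :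
        SumOneList {1, -(m : ℤ)} N)) ⟨fun s t h => ?_, fun l => ?_⟩).symm.trans ?_
  · exact Subtype.ext (fallsAt_injective m (congrArg Subtype.val h))
  · obtain ⟨hl, hA, hs⟩ := l.2
    obtain ⟨s, hls⟩ := exists_fallsAt_eq m hl hA
    exact ⟨⟨s, (hsum s).mp (hls ▸ hs)⟩, Subtype.ext hls⟩
  · rw [Nat.card_eq_fintype_card, Fintype.card_finset_len, Fintype.card_fin]

lemma isMDyckPath_iff_prefixSumsPos_cons {m : ℕ} {l : List ℤ} :
    IsMDyckPath m l ↔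
      (∀ s ∈ l, s ∈ ({1, -(m : ℤ)} : Set ℤ)) ∧ l.sum = 0 ∧ (1 :: l).PrefixSumsPos := by
  rw [List.prefixSumsPos_cons_iff, IsMDyckPath]
  refine and_congr_right fun _ => ⟨fun ⟨hnn, h0⟩ => ⟨h0, fun k _ => by linarith [hnn k]⟩,
    fun ⟨h0, hpos⟩ => ⟨fun k => ?_, h0⟩⟩
  rcases le_or_gt k l.length with hk | hk
  · linarith [hpos k hk]
  · rw [List.take_of_length_le hk.le, h0]

lemma eq_one_of_prefixSumsPos_cons {m : ℕ} {a : ℤ} {l : List ℤ}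
    (ha : a ∈ ({1, -(m : ℤ)} : Set ℤ)) (hpos : (a :: l).PrefixSumsPos) : a = 1 := by
  have := List.prefixSumsPos_cons_iff.mp hpos 0 (Nat.zero_le _)
  obtain ha | ha : a = 1 ∨ a = -(m : ℤ) := ha
  · exact ha
  · simp only [ha, List.take_zero, List.sum_nil, add_zero] at this
    omega

theorem card_mDyckPath (m L : ℕ) :
    Nat.card {l : List ℤ // l.length = L ∧ IsMDyckPath m l} =
      Nat.card {l : SumOneList {1, -(m : ℤ)} (L + 1) // l.1.PrefixSumsPos} := by
  refine Nat.card_eq_of_bijective (fun l => ⟨⟨1 :: l.1, by simp [l.2.1], ?_, ?_⟩, ?_⟩) ⟨?_, ?_⟩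
  · obtain ⟨hA, -, -⟩ := isMDyckPath_iff_prefixSumsPos_cons.mp l.2.2
    exact List.forall_mem_cons.mpr ⟨Or.inl rfl, hA⟩
  · obtain ⟨-, h0, -⟩ := isMDyckPath_iff_prefixSumsPos_cons.mp l.2.2
    simp [h0]
  · exact (isMDyckPath_iff_prefixSumsPos_cons.mp l.2.2).2.2
  · intro l l' h
    exact Subtype.ext (List.cons_injective (congrArg (·.1.1) h))
  · rintro ⟨⟨_ | ⟨a, l⟩, hL, hA, hs⟩, hpos⟩
    · simp at hL
    obtain rfl := eq_one_of_prefixSumsPos_cons (hA a (List.mem_cons_self ..)) hpos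
    refine ⟨⟨l, by simpa using hL, isMDyckPath_iff_prefixSumsPos_cons.mpr
      ⟨fun s hs => hA s (List.mem_cons_of_mem _ hs), by simpa using hs, hpos⟩⟩, rfl⟩

theorem stmt_2_general (m n : ℕ) :
    (Nat.card {l : List ℤ // l.length = (m + 1) * n ∧ IsMDyckPath m l} : ℚ)
      = (1 / ((m * n + 1 : ℕ) : ℚ)) * (((m + 1) * n).choose n : ℚ) := by
  set L := (m + 1) * n with hL
  set D := Nat.card {l : List ℤ // l.length = L ∧ IsMDyckPath m l} with hD_def
  have hcycle : D * (L + 1) = (L + 1).choose n := by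
    rw [hD_def, card_mDyckPath, mul_comm, ← card_sumOneList, card_sumOneList_riseFall]
  have hbinom : L.choose n * (L + 1) = (L + 1).choose n * (m * n + 1) := by
    rw [Nat.choose_mul_succ_eq, show L + 1 - n = m * n + 1 by rw [hL]; lia]
  have hD : D * (m * n + 1) = L.choose n :=
    Nat.eq_of_mul_eq_mul_right (Nat.add_one_pos L) (by rw [hbinom, ← hcycle]; ring)
  rw [one_div_mul_eq_div, eq_div_iff (by positivity), ← hD]
  push_cast
  ring

/-- The number of `m`-Dyck paths from `(0,0)` to `((m+1)n, 0)` equals the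
Fuss–Catalan number `C_n^{(m+1)} = (1/(mn+1)) binom((m+1)n, n)`. -/
theorem stmt_2 (m n : ℕ) (hm : 1 ≤ m) :
    (Nat.card {l : List ℤ // l.length = (m + 1) * n ∧ IsMDyckPath m l} : ℚ)
      = (1 / ((m * n + 1 : ℕ) : ℚ)) * (((m + 1) * n).choose n : ℚ) :=
  stmt_2_general m n
end

section
/- If F(t) is the unique formal power series with F(0)=1 satisfying F = ∏_{i=0}^{m} (1 + x_i t F), then for all n ≥ k ≥ 0, the coefficient of t^{n-k} in F(t)^{k+1} equals ((k+1)/(n+1)) · Σ_{j_0+...+j_m = n-k} ∏_{i=0}^{m} binom(n+1, j_i) x_i^{j_i}. -/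
/-!
Write `f = t F` and `G = F⁻¹`. Comparing the coefficients of `t^{n+1}` in `f^{k+1}` and in
`t (f^{k+1})'` gives `(n+1) [t^{n-k}] F^{k+1} = (k+1) [t^{n-k}] F^k f'`. Multiplying `F^k f'` by
`F^{n+1} G^{n+1} = 1` and expanding `F^{n+1} = ∏ (1 + x_i f)^{n+1} = Σ_j c_j f^{|j|}` reduces the
right side to the residues `[t^r] G^{r+1} f'` with `r = n - k - |j|`. These vanish for `r ≥ 1`,
since `r G^{r+1} f' = r G^r - t (G^r)'`, and equal `1` for `r = 0`; so only `|j| = n - k` survives.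
-/

open PowerSeries Finset

namespace PowerSeries

variable {R : Type*}

theorem coeff_X_mul_derivative [CommSemiring R] (f : R⟦X⟧) (n : ℕ) :
    coeff n (X * d⁄dX R f) = n * coeff n f := by
  cases n with
  | zero => simp
  | succ n => rw [coeff_succ_X_mul, coeff_derivative, mul_comm, Nat.cast_succ]

theorem natCast_mul_coeff_pow_succ [CommSemiring R] (f : R⟦X⟧) (k s : ℕ) :
    ((s + k + 1 : ℕ) : R) * coeff s (f ^ (k + 1))
      = (k + 1) * coeff s (f ^ k * d⁄dX R (X * f)) := by
  have hderiv : X * d⁄dX R ((X * f) ^ (k + 1))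
      = C ((k : R) + 1) * (X ^ (k + 1) * (f ^ k * d⁄dX R (X * f))) := by
    rw [derivative_pow, Nat.add_sub_cancel, mul_pow]
    simp only [map_add, map_natCast, map_one, Nat.cast_add, Nat.cast_one]
    ring
  have := coeff_X_mul_derivative ((X * f) ^ (k + 1)) (s + k + 1)
  rwa [hderiv, coeff_C_mul, mul_pow, show s + k + 1 = s + (k + 1) by omega, coeff_X_pow_mul,
    coeff_X_pow_mul, eq_comm] at this

theorem derivative_eq_of_mul_eq_one [CommRing R] {F G : R⟦X⟧} (hGF : G * F = 1) :
    d⁄dX R G = -G ^ 2 * d⁄dX R F := by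
  have h := congrArg (d⁄dX R) hGF
  rw [Derivation.leibniz, derivative_one, smul_eq_mul, smul_eq_mul] at h
  linear_combination G * h - d⁄dX R G * hGF

theorem coeff_pow_succ_mul_derivative_X_mul_of_mul_eq_one [CommRing R] [IsAddTorsionFree R]
    {F G : R⟦X⟧} (hGF : G * F = 1) (r : ℕ) :
    coeff r (G ^ (r + 1) * d⁄dX R (X * F)) = if r = 0 then 1 else 0 := by
  cases r with
  | zero =>
    have hconst : constantCoeff (d⁄dX R (X * F)) = constantCoeff F := by
      rw [← coeff_zero_eq_constantCoeff_apply, coeff_derivative, coeff_succ_X_mul]; simp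
    rw [if_pos rfl, coeff_zero_eq_constantCoeff_apply, map_mul, hconst, pow_one, ← map_mul, hGF,
      map_one]
  | succ r =>
    have hresidue : ((r + 1 : ℕ) : R⟦X⟧) * (G ^ (r + 2) * d⁄dX R (X * F))
        = ((r + 1 : ℕ) : R⟦X⟧) * G ^ (r + 1) - X * d⁄dX R (G ^ (r + 1)) := by
      rw [derivative_pow, derivative_eq_of_mul_eq_one hGF, Derivation.leibniz, derivative_X]
      simp only [smul_eq_mul, Nat.add_sub_cancel]
      linear_combination (↑(r + 1) * G ^ (r + 1) : R⟦X⟧) * hGF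
    have hcoeff := congrArg (coeff (r + 1)) hresidue
    rw [map_sub, coeff_X_mul_derivative, ← map_natCast (C (R := R)), coeff_C_mul, coeff_C_mul,
      sub_self, ← nsmul_eq_mul, nsmul_eq_zero_iff_right r.succ_ne_zero] at hcoeff
    rw [hcoeff, if_neg r.succ_ne_zero]

theorem coeff_pow_mul_derivative_eq_sum [CommRing R] [IsAddTorsionFree R] {F : R⟦X⟧}
    (hF : IsUnit F) {α : Type*} (S : Finset α) (c : α → R) (e : α → ℕ) {k s : ℕ}
    (hpow : F ^ (k + s + 1) = ∑ a ∈ S, C (c a) * (X * F) ^ e a) :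
    coeff s (F ^ k * d⁄dX R (X * F)) = ∑ a ∈ S with e a = s, c a := by
  obtain ⟨G, hGF⟩ := hF.exists_left_inv
  have hterm (j : ℕ) : coeff s ((X * F) ^ j * (G ^ (s + 1) * d⁄dX R (X * F)))
      = if j = s then 1 else 0 := by
    by_cases hjs : j ≤ s
    · obtain ⟨r, rfl⟩ := Nat.exists_eq_add_of_le hjs
      have hcancel : (X * F) ^ j * (G ^ (j + r + 1) * d⁄dX R (X * F))
          = X ^ j * (G ^ (r + 1) * d⁄dX R (X * F)) := by
        calc _ = X ^ j * (G * F) ^ j * (G ^ (r + 1) * d⁄dX R (X * F)) := by ring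
          _ = _ := by rw [hGF, one_pow, mul_one]
      rw [hcancel, coeff_X_pow_mul', if_pos hjs, Nat.add_sub_cancel_left,
        coeff_pow_succ_mul_derivative_X_mul_of_mul_eq_one hGF]
      simp
    · rw [mul_pow, mul_assoc, coeff_X_pow_mul', if_neg hjs, if_neg (by omega)]
  calc coeff s (F ^ k * d⁄dX R (X * F))
      = coeff s (F ^ (k + s + 1) * (G ^ (s + 1) * d⁄dX R (X * F))) := by
        congr 1
        calc _ = F ^ k * (G * F) ^ (s + 1) * d⁄dX R (X * F) := by rw [hGF, one_pow, mul_one]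
          _ = _ := by ring
    _ = ∑ a ∈ S, c a * if e a = s then 1 else 0 := by
        simp only [hpow, sum_mul, map_sum, mul_assoc, coeff_C_mul, hterm]
    _ = ∑ a ∈ S with e a = s, c a := by simp [sum_filter]

theorem prod_one_add_C_mul_pow [CommSemiring R] {ι : Type*} [Fintype ι] [DecidableEq ι]
    (x : ι → R) (y : R⟦X⟧) (N : ℕ) :
    (∏ i, (1 + C (x i) * y)) ^ N = ∑ d ∈ Fintype.piFinset fun _ => range (N + 1),
      C (∏ i, (N.choose (d i) : R) * x i ^ d i) * y ^ ∑ i, d i := by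
  rw [← prod_pow]
  simp_rw [add_comm (1 : R⟦X⟧), add_pow, one_pow, mul_one]
  rw [prod_univ_sum]
  refine sum_congr rfl fun d _ => ?_
  simp only [mul_pow, prod_mul_distrib, prod_pow_eq_pow_sum, map_mul, map_prod, map_pow,
    map_natCast]
  ring

end PowerSeries

theorem Finset.filter_piFinset_range_sum_eq_piAntidiag {ι : Type*} [Fintype ι] [DecidableEq ι]
    {N s : ℕ} (hs : s ≤ N) :
    {d ∈ Fintype.piFinset fun _ : ι => range (N + 1) | ∑ i, d i = s} = piAntidiag univ s := by
  ext d
  simp only [mem_filter, Fintype.mem_piFinset, mem_range, mem_piAntidiag, mem_univ, implies_true,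
    and_true]
  refine ⟨And.right, fun hd => ⟨fun i => ?_, hd⟩⟩
  calc d i ≤ ∑ j, d j := single_le_sum (fun j _ => Nat.zero_le (d j)) (mem_univ i)
    _ = s := hd
    _ < N + 1 := Nat.lt_succ_of_le hs

theorem stmt_3_general (m : ℕ)
    (F : PowerSeries (MvPolynomial (Fin (m + 1)) ℚ))
    (hF0 : PowerSeries.constantCoeff (R := MvPolynomial (Fin (m + 1)) ℚ) F = 1)
    (hF : F = ∏ i : Fin (m + 1),
      (1 + PowerSeries.C (R := MvPolynomial (Fin (m + 1)) ℚ) (MvPolynomial.X i)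
            * PowerSeries.X * F))
    (n k : ℕ) (hk : k ≤ n) :
    PowerSeries.coeff (R := MvPolynomial (Fin (m + 1)) ℚ) (n - k) (F ^ (k + 1))
      = MvPolynomial.C (((k : ℚ) + 1) / ((n : ℚ) + 1))
        * ∑ j ∈ Finset.Nat.antidiagonalTuple (m + 1) (n - k),
            ∏ i : Fin (m + 1),
              ((n + 1).choose (j i) : MvPolynomial (Fin (m + 1)) ℚ)
                * MvPolynomial.X i ^ (j i) := by
  have hunit : IsUnit F := isUnit_iff_constantCoeff.mpr (hF0 ▸ isUnit_one)
  have hpow : F ^ (k + (n - k) + 1) = ∑ d ∈ Fintype.piFinset fun _ => range (n + 1 + 1),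
      C (∏ i, ((n + 1).choose (d i) : MvPolynomial (Fin (m + 1)) ℚ) * MvPolynomial.X i ^ d i)
        * (X * F) ^ ∑ i, d i := by
    rw [show k + (n - k) + 1 = n + 1 by omega]
    conv_lhs => rw [hF]
    simp_rw [mul_assoc]
    exact prod_one_add_C_mul_pow _ _ _
  have hcoeff := coeff_pow_mul_derivative_eq_sum hunit _ _ _ hpow
  rw [filter_piFinset_range_sum_eq_piAntidiag (by omega),
    piAntidiag_univ_fin_eq_antidiagonalTuple] at hcoeff
  have hscaled := natCast_mul_coeff_pow_succ F k (n - k)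
  rw [hcoeff, show n - k + k + 1 = n + 1 by omega] at hscaled
  have hn : ((n + 1 : ℕ) : MvPolynomial (Fin (m + 1)) ℚ) ≠ 0 :=
    Nat.cast_ne_zero.mpr n.succ_ne_zero
  refine mul_left_cancel₀ hn ?_
  rw [hscaled, ← mul_assoc]
  congr 1
  rw [← map_natCast MvPolynomial.C (n + 1), ← map_mul, Nat.cast_succ,
    mul_div_cancel₀ _ (by positivity), map_add, map_natCast, map_one]

/-- If `F` is the formal power series with constant term `1` satisfying
`F = ∏_{i=0}^{m} (1 + x_i t F)`, then for `n ≥ k ≥ 0` the coefficient of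
`t^{n-k}` in `F^{k+1}` equals
`((k+1)/(n+1)) Σ_{j_0+⋯+j_m = n-k} ∏_i binom(n+1, j_i) x_i^{j_i}`. -/
theorem stmt_3 (m : ℕ) (hm : 1 ≤ m)
    (F : PowerSeries (MvPolynomial (Fin (m + 1)) ℚ))
    (hF0 : PowerSeries.constantCoeff (R := MvPolynomial (Fin (m + 1)) ℚ) F = 1)
    (hF : F = ∏ i : Fin (m + 1),
      (1 + PowerSeries.C (R := MvPolynomial (Fin (m + 1)) ℚ) (MvPolynomial.X i)
            * PowerSeries.X * F))
    (n k : ℕ) (hk : k ≤ n) :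
    PowerSeries.coeff (R := MvPolynomial (Fin (m + 1)) ℚ) (n - k) (F ^ (k + 1))
      = MvPolynomial.C (((k : ℚ) + 1) / ((n : ℚ) + 1))
        * ∑ j ∈ Finset.Nat.antidiagonalTuple (m + 1) (n - k),
            ∏ i : Fin (m + 1),
              ((n + 1).choose (j i) : MvPolynomial (Fin (m + 1)) ℚ)
                * MvPolynomial.X i ^ (j i) :=
  stmt_3_general m F hF0 hF n k hk
end

section
/- For integers 1 ≤ p and n ≥ 1 and 0 ≤ j ≤ n, one has (1/n)·Σ_{i=0}^{j} binom(pn, n-i-1)·binom(n, i)·binom(n-i, n-j) = (1/((p-1)n+j+1))·binom(pn+j, n)·binom(n, j). -/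
/-! After the trinomial revision `C(n,i) C(n-i,n-j) = C(n,j) C(j,i)` the sum becomes
`C(n,j) Σ_i C(j,i) C(pn, n-1-i) = C(n,j) C(pn+j, n-1)` by Vandermonde's convolution, and
`C(N, n-1) (N - n + 1) = n C(N, n)` with `N = pn + j` turns this into the right-hand side. -/

open Finset

namespace Nat

theorem choose_mul_choose_sub_sub {n i j : ℕ} (hij : i ≤ j) (hjn : j ≤ n) :
    n.choose i * (n - i).choose (n - j) = n.choose j * j.choose i := by
  rw [choose_mul hij, ← choose_symm (by omega : j - i ≤ n - i)]
  congr 2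
  omega

theorem add_choose_eq_sum_range (m j k : ℕ) :
    (m + j).choose k = ∑ i ∈ range (k + 1), j.choose i * m.choose (k - i) := by
  rw [add_comm, add_choose_eq, Finset.Nat.sum_antidiagonal_eq_sum_range_succ
    (fun a b => j.choose a * m.choose b)]

theorem sum_range_choose_mul_choose_mul_choose (m n j : ℕ) (hn : 1 ≤ n) (hjn : j ≤ n) :
    ∑ i ∈ range (j + 1),
        (if i < n then m.choose (n - i - 1) else 0) * n.choose i * (n - i).choose (n - j)
      = n.choose j * (m + j).choose (n - 1) := by
  have hrevise : ∀ i ∈ (range (j + 1)).filter (· < n),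
      m.choose (n - i - 1) * n.choose i * (n - i).choose (n - j)
        = n.choose j * (j.choose i * m.choose (n - 1 - i)) := by
    intro i hi
    have hij : i ≤ j := by simp only [mem_filter, mem_range] at hi; omega
    rw [mul_assoc, choose_mul_choose_sub_sub hij hjn, Nat.sub_right_comm]
    ring
  have hextend : ∑ i ∈ (range (j + 1)).filter (· < n), j.choose i * m.choose (n - 1 - i)
      = ∑ i ∈ range n, j.choose i * m.choose (n - 1 - i) := by
    refine sum_subset (fun i hi => by simp only [mem_filter, mem_range] at hi ⊢; omega) ?_
    intro i hi hnot
    simp only [mem_filter, mem_range, not_and, not_lt] at hi hnot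
    rw [choose_eq_zero_of_lt (by omega : j < i), zero_mul]
  simp_rw [ite_mul, zero_mul]
  rw [← sum_filter, sum_congr rfl hrevise, ← mul_sum, hextend, add_choose_eq_sum_range,
    Nat.sub_add_cancel hn]

end Nat

/-- The identity `(1/n) Σ_{i=0}^{j} binom(pn, n-i-1) binom(n, i) binom(n-i, n-j)
  = (1/((p-1)n+j+1)) binom(pn+j, n) binom(n, j)`,
with the convention that `binom(pn, n-i-1) = 0` when `n-i-1 < 0` (i.e. `i ≥ n`). -/
theorem stmt_8 (p n j : ℕ) (hp : 1 ≤ p) (hn : 1 ≤ n) (hj : j ≤ n) :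
    (1 / (n : ℚ)) * ∑ i ∈ Finset.range (j + 1),
        (if i < n then ((p * n).choose (n - i - 1) : ℚ) else 0)
          * (n.choose i : ℚ) * ((n - i).choose (n - j) : ℚ)
      = (1 / (((p - 1) * n + j + 1 : ℕ) : ℚ)) * ((p * n + j).choose n : ℚ)
          * (n.choose j : ℚ) := by
  have hsum := Nat.sum_range_choose_mul_choose_mul_choose (p * n) n j hn hj
  have hpred : (p * n + j).choose n * n
      = (p * n + j).choose (n - 1) * ((p - 1) * n + j + 1) := by
    have hsucc := Nat.choose_succ_right_eq (p * n + j) (n - 1)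
    have hle : n ≤ p * n := Nat.le_mul_of_pos_left n hp
    rw [Nat.sub_add_cancel hn] at hsucc
    rw [hsucc, Nat.sub_one_mul]
    congr 1
    omega
  have hsumℚ := congrArg (Nat.cast : ℕ → ℚ) hsum
  push_cast at hsumℚ
  rw [hsumℚ]
  have hn0 : (n : ℚ) ≠ 0 := by positivity
  have hD0 : (((p - 1) * n + j + 1 : ℕ) : ℚ) ≠ 0 := by positivity
  rw [one_div_mul_eq_div, one_div_mul_eq_div, div_mul_eq_mul_div, div_eq_div_iff hn0 hD0]
  exact_mod_cast calc
    n.choose j * (p * n + j).choose (n - 1) * ((p - 1) * n + j + 1)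
      = n.choose j * ((p * n + j).choose n * n) := by rw [hpred, mul_assoc]
    _ = (p * n + j).choose n * n.choose j * n := by ring
end

section
/- The number of Stirling permutations of the multiset {1^{r_1}, 2^{r_2}, ..., n^{r_n}} equals (r_1+1)(r_1+r_2+1)⋯(r_1+...+r_{n-1}+1). In particular, the number of r-Stirling permutations of order n (i.e., of the multiset with each of 1,...,n appearing r times) equals the multifactorial F_n^{(r)} = ∏_{j=0}^{n-1}(1+jr). -/
/-! The copies of the largest letter `n` in a Stirling permutation form one contiguous block,
since every letter between two of them is at least `n`. Deleting that block leaves a Stirling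
permutation of `{0^{r_0}, …, (n-1)^{r_{n-1}}}`, a word of length `L = r_0 + ⋯ + r_{n-1}`, and
conversely a block of `n`s may be inserted into any of its `L + 1` gaps without creating a
pattern `a b a` with `b < a`. So adding the letter `n` multiplies the count by `L + 1`. -/

def IsStirlingWord (w : List ℕ) : Prop :=
  ∀ i j k : Fin w.length, i < j → j < k → w.get i = w.get k → w.get i ≤ w.get j

open List

namespace List

variable {α : Type*} {a : α}

theorem Sublist.of_cons_sublist_append_of_notMem {l x z : List α}
    (h : a :: l <+ x ++ z) (ha : a ∉ x) : a :: l <+ z := by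
  obtain ⟨_ | ⟨c, l₁⟩, l₂, hl, hl₁, hl₂⟩ := sublist_append_iff.1 h
  · simpa [hl] using hl₂
  · simp only [cons_append, cons.injEq] at hl
    exact absurd (hl₁.subset (mem_cons_self ..)) (hl.1 ▸ ha)

theorem exists_eq_append_replicate_append {w : List α} (h : ∀ b ≠ a, ¬ [a, b, a] <+ w) :
    ∃ x k y, w = x ++ replicate k a ++ y ∧ a ∉ x ∧ a ∉ y := by
  induction w with
  | nil => exact ⟨[], 0, [], rfl, not_mem_nil, not_mem_nil⟩
  | cons c w ih =>
    obtain ⟨x, k, y, rfl, hx, hy⟩ := ih fun b hb hsub => h b hb (hsub.cons c)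
    by_cases hc : c = a
    · subst hc
      rcases x with _ | ⟨b, x⟩
      · exact ⟨[], k + 1, y, by simp [replicate_succ], hx, hy⟩
      have hb : b ≠ c := fun hb => hx (hb ▸ mem_cons_self ..)
      rcases k with _ | k
      · exact ⟨[], 1, b :: x ++ y, by simp, not_mem_nil, by simp_all⟩
      · refine absurd ?_ (h b hb)
        simp [replicate_succ]
    · exact ⟨c :: x, k, y, rfl, by simp [Ne.symm hc, hx], hy⟩

variable [DecidableEq α]

theorem idxOf_le_length_filter_ne (w : List α) (a : α) :
    w.idxOf a ≤ (w.filter (· ≠ a)).length := by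
  induction w with
  | nil => simp
  | cons c w ih =>
    by_cases hc : c = a
    · simp [hc]
    · rw [idxOf_cons_ne w hc, filter_cons_of_pos (by simpa using hc), length_cons]
      exact Nat.succ_le_succ ih

theorem idxOf_append_replicate_append {x y : List α} {k : ℕ} (hx : a ∉ x) (hk : 0 < k) :
    (x ++ replicate k a ++ y).idxOf a = x.length := by
  obtain ⟨k, rfl⟩ := Nat.exists_eq_add_one_of_ne_zero hk.ne'
  simp [idxOf_append_of_notMem hx, replicate_succ]

theorem filter_ne_append_replicate_append {x y : List α} (k : ℕ) (hx : a ∉ x) (hy : a ∉ y) :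
    (x ++ replicate k a ++ y).filter (· ≠ a) = x ++ y := by
  have keep : ∀ l : List α, a ∉ l → l.filter (· ≠ a) = l := fun l hl =>
    filter_eq_self.2 fun b hb => by simpa using ne_of_mem_of_not_mem hb hl
  rw [filter_append, filter_append, keep x hx, keep y hy]
  simp

end List

theorem isStirlingWord_iff_sublist {w : List ℕ} :
    IsStirlingWord w ↔ ∀ a b, [a, b, a] <+ w → a ≤ b := by
  simp only [sublist_iff_exists_fin_orderEmbedding_get_eq]
  constructor
  · rintro hw a b ⟨f, hf⟩
    have h := hw (f 0) (f 1) (f 2) (f.strictMono (show (0 : Fin 3) < 1 by decide))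
      (f.strictMono (show (1 : Fin 3) < 2 by decide))
    simp only [← hf] at h
    exact h rfl
  · intro h i j k hij hjk hik
    have hmono : StrictMono ![i, j, k] :=
      Fin.strictMono_iff_lt_succ.2 (by simp [Fin.forall_fin_succ, hij, hjk])
    refine h _ _ ⟨OrderEmbedding.ofStrictMono _ hmono, fun x => ?_⟩
    fin_cases x
    exacts [rfl, rfl, hik]

theorem IsStirlingWord.sublist {u w : List ℕ} (hw : IsStirlingWord w) (h : u <+ w) :
    IsStirlingWord u :=
  isStirlingWord_iff_sublist.2 fun a b hab => isStirlingWord_iff_sublist.1 hw a b (hab.trans h)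

theorem IsStirlingWord.exists_eq_append_replicate_append {w : List ℕ} {m : ℕ}
    (hw : IsStirlingWord w) (hm : ∀ b ∈ w, b ≤ m) :
    ∃ x y, w = x ++ replicate (w.count m) m ++ y ∧ m ∉ x ∧ m ∉ y := by
  obtain ⟨x, k, y, rfl, hx, hy⟩ := List.exists_eq_append_replicate_append fun b hb hsub =>
    hb (le_antisymm (hm b (hsub.subset (by simp))) (isStirlingWord_iff_sublist.1 hw m b hsub))
  refine ⟨x, y, ?_, hx, hy⟩
  simp [count_eq_zero_of_not_mem hx, count_eq_zero_of_not_mem hy]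

theorem IsStirlingWord.append_replicate_append {x y : List ℕ} {m : ℕ} (c : ℕ)
    (h : IsStirlingWord (x ++ y)) (hlt : ∀ a ∈ x ++ y, a < m) :
    IsStirlingWord (x ++ replicate c m ++ y) := by
  have hx : m ∉ x := fun hm => (hlt m (mem_append_left y hm)).false
  have hy : m ∉ y := fun hm => (hlt m (mem_append_right x hm)).false
  refine isStirlingWord_iff_sublist.2 fun a b hsub => ?_
  by_cases ham : a = m
  · subst ham
    -- both outer letters of the pattern lie in the block of `a`s, hence so does `b`
    have hblock : [a, b, a] <+ replicate c a := by
      have hsub' := reverse_sublist.2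
        ((append_assoc .. ▸ hsub).of_cons_sublist_append_of_notMem hx)
      rw [reverse_append, reverse_replicate] at hsub'
      simpa using hsub'.of_cons_sublist_append_of_notMem (by simpa using hy)
    exact (eq_of_mem_replicate (hblock.subset (by simp))).ge
  have ha : a ∈ x ++ y := by
    have := hsub.subset (mem_cons_self ..)
    simp only [mem_append, mem_replicate] at this ⊢
    tauto
  rcases eq_or_ne b m with rfl | hbm
  · exact (hlt a ha).le
  · have hpat := hsub.filter (· ≠ m)
    rw [filter_ne_append_replicate_append c hx hy] at hpat
    simp only [filter_cons, ne_eq, ham, hbm, not_false_eq_true, decide_true, filter_nil,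
      if_true] at hpat
    exact isStirlingWord_iff_sublist.1 h a b hpat

def stirlingPerms (n : ℕ) (r : ℕ → ℕ) : Set (List ℕ) :=
  {w | (∀ i, w.count i = if i < n then r i else 0) ∧ IsStirlingWord w}

section Counts

variable {w : List ℕ} {n : ℕ} {r : ℕ → ℕ}

theorem lt_of_mem_of_count_eq (hw : ∀ i, w.count i = if i < n then r i else 0) {a : ℕ}
    (ha : a ∈ w) : a < n := by
  by_contra h
  rw [← count_pos_iff, hw a, if_neg h] at ha
  exact ha.false

theorem length_eq_sum_of_count_eq (hw : ∀ i, w.count i = if i < n then r i else 0) :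
    w.length = ∑ i ∈ Finset.range n, r i := by
  rw [← Multiset.coe_card, ← Multiset.sum_count_eq_card (s := Finset.range n)
    fun a ha => Finset.mem_range.2 (lt_of_mem_of_count_eq hw ha)]
  refine Finset.sum_congr rfl fun i hi => ?_
  rw [Multiset.coe_count, hw, if_pos (Finset.mem_range.1 hi)]

end Counts

theorem stirlingPerms_zero (r : ℕ → ℕ) : stirlingPerms 0 r = {[]} := by
  refine Set.eq_singleton_iff_unique_mem.2 ⟨⟨fun i => by simp, fun i => i.elim0⟩, fun w hw => ?_⟩
  exact eq_nil_iff_forall_not_mem.2 fun a ha => (lt_of_mem_of_count_eq hw.1 ha).not_ge a.zero_le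

namespace stirlingPerms

section Membership

variable {v w : List ℕ} {n : ℕ} {r : ℕ → ℕ}

theorem filter_ne_mem (hw : w ∈ stirlingPerms (n + 1) r) :
    w.filter (· ≠ n) ∈ stirlingPerms n r := by
  refine ⟨fun i => ?_, hw.2.sublist filter_sublist⟩
  rcases eq_or_ne i n with rfl | hi
  · simp [count_eq_zero]
  · rw [count_filter (by simpa using hi), hw.1]
    grind

theorem take_append_replicate_append_drop_mem (hv : v ∈ stirlingPerms n r) (k : ℕ) :
    v.take k ++ replicate (r n) n ++ v.drop k ∈ stirlingPerms (n + 1) r := by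
  have hlt : ∀ a ∈ v.take k ++ v.drop k, a < n := by
    rw [take_append_drop]; exact fun a => lt_of_mem_of_count_eq hv.1
  refine ⟨fun i => ?_, (take_append_drop k v ▸ hv.2).append_replicate_append _ hlt⟩
  rw [count_append, count_append, add_right_comm, ← count_append, take_append_drop, hv.1,
    count_replicate]
  grind

theorem idxOf_lt (hw : w ∈ stirlingPerms (n + 1) r) :
    w.idxOf n < ∑ i ∈ Finset.range n, r i + 1 :=
  Nat.lt_succ_of_le <| (idxOf_le_length_filter_ne w n).trans_eq
    (length_eq_sum_of_count_eq (filter_ne_mem hw).1)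

end Membership

def succEquiv (n : ℕ) (r : ℕ → ℕ) (hrn : 0 < r n) :
    stirlingPerms (n + 1) r ≃ Fin (∑ i ∈ Finset.range n, r i + 1) × stirlingPerms n r where
  toFun w := (⟨w.1.idxOf n, idxOf_lt w.2⟩, ⟨w.1.filter (· ≠ n), filter_ne_mem w.2⟩)
  invFun p := ⟨p.2.1.take p.1 ++ replicate (r n) n ++ p.2.1.drop p.1, take_append_replicate_append_drop_mem p.2.2 p.1⟩
  left_inv := by
    rintro ⟨w, hw⟩
    obtain ⟨x, y, hxy, hx, hy⟩ := hw.2.exists_eq_append_replicate_append fun b hb =>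
      Nat.lt_succ_iff.1 (lt_of_mem_of_count_eq hw.1 hb)
    rw [hw.1 n, if_pos n.lt_succ_self] at hxy
    subst hxy
    ext1
    simp only [idxOf_append_replicate_append hx hrn, filter_ne_append_replicate_append _ hx hy,
      take_left, drop_left]
  right_inv := by
    rintro ⟨⟨k, hk⟩, v, hv⟩
    have hnv : n ∉ v := fun h => (lt_of_mem_of_count_eq hv.1 h).false
    have hkv : k ≤ v.length := by rw [length_eq_sum_of_count_eq hv.1]; omega
    have hnt : n ∉ v.take k := fun h => hnv (mem_of_mem_take h)
    refine Prod.ext (Fin.ext ?_) (Subtype.ext ?_)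
    · exact (idxOf_append_replicate_append hnt hrn).trans (length_take_of_le hkv)
    · exact (filter_ne_append_replicate_append _ hnt fun h => hnv (mem_of_mem_drop h)).trans
        (take_append_drop k v)

theorem card_succ (n : ℕ) (r : ℕ → ℕ) (hrn : 0 < r n) :
    Nat.card (stirlingPerms (n + 1) r) =
      (∑ i ∈ Finset.range n, r i + 1) * Nat.card (stirlingPerms n r) := by
  rw [Nat.card_congr (succEquiv n r hrn), Nat.card_prod, Nat.card_fin]

theorem card_eq_prod (n : ℕ) (r : ℕ → ℕ) (hr : ∀ i < n, 1 ≤ r i) :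
    Nat.card (stirlingPerms n r) = ∏ j ∈ Finset.range n, (∑ i ∈ Finset.range j, r i + 1) := by
  induction n with
  | zero => simp [stirlingPerms_zero]
  | succ n ih =>
    rw [card_succ n r (hr n n.lt_succ_self), ih fun i hi => hr i (hi.trans n.lt_succ_self),
      Finset.prod_range_succ, mul_comm]

end stirlingPerms

/-- The number of Stirling permutations of the multiset `{0^{r_0}, 1^{r_1}, …, (n-1)^{r_{n-1}}}`
(each `r_i ≥ 1`) equals `(r_0+1)(r_0+r_1+1)⋯(r_0+⋯+r_{n-2}+1)`.  In particular, the number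
of `c`-Stirling permutations of order `n` (each letter appearing exactly `c` times) equals
the multifactorial `F_n^{(c)} = ∏_{j=0}^{n-1} (1+jc)`. -/
theorem stmt_12 (n : ℕ) (r : ℕ → ℕ) (hr : ∀ i < n, 1 ≤ r i) :
    Nat.card {w : List ℕ //
        (∀ i : ℕ, w.count i = if i < n then r i else 0) ∧ IsStirlingWord w}
      = ∏ j ∈ Finset.range (n - 1), ((∑ i ∈ Finset.range (j + 1), r i) + 1)
    ∧ ∀ c : ℕ, 1 ≤ c →
        Nat.card {w : List ℕ //
            (∀ i : ℕ, w.count i = if i < n then c else 0) ∧ IsStirlingWord w}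
          = ∏ j ∈ Finset.range n, (1 + j * c) := by
  refine ⟨(stirlingPerms.card_eq_prod n r hr).trans ?_, fun c hc => ?_⟩
  · cases n with
    | zero => rfl
    | succ n => simp [Finset.prod_range_succ']
  · refine (stirlingPerms.card_eq_prod n _ fun _ _ => hc).trans
      (Finset.prod_congr rfl fun j _ => ?_)
    simp [add_comm]
end

section
/- The r-th order Eulerian numbers ⟨n,k⟩^{(r)}, defined by the recurrence ⟨n,k⟩^{(r)} = (k+1)·⟨n-1,k⟩^{(r)} + (rn−(r−1)−k)·⟨n-1,k-1⟩^{(r)} for n ≥ 1 with ⟨0,k⟩^{(r)} = δ_{0k}, satisfy: (i) ⟨n,n-1⟩^{(r)} = F_n^{(r-1)} and (ii) Σ_{k=0}^{n} ⟨n,k⟩^{(r)} = F_n^{(r)}, where F_n^{(s)} = ∏_{j=0}^{n-1}(1+js). -/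
/-- The `r`-th order Eulerian numbers `⟨n,k⟩^{(r)}`, defined by
`⟨0,k⟩^{(r)} = δ_{0k}` and
`⟨n,k⟩^{(r)} = (k+1)⟨n-1,k⟩^{(r)} + (rn−(r−1)−k)⟨n-1,k-1⟩^{(r)}` for `n ≥ 1`
(with `⟨n-1,-1⟩^{(r)} = 0`). -/
def eulerianR (r : ℕ) : ℕ → ℕ → ℤ
  | 0, k => if k = 0 then 1 else 0
  | n + 1, k =>
      ((k : ℤ) + 1) * eulerianR r n k
        + ((r : ℤ) * ((n : ℤ) + 1) - ((r : ℤ) - 1) - (k : ℤ))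
            * (if k = 0 then 0 else eulerianR r n (k - 1))

/-!
Both identities follow by induction on `n` from the recurrence. On the diagonal `k = n - 1` the
term `(k + 1)⟨n-1,k⟩` vanishes, leaving the factor `rn - (r-1) - (n-1) = 1 + (n-1)(r-1)`.
For the row sums, `⟨n,k⟩` feeds `⟨n+1,k⟩` with weight `k + 1` and `⟨n+1,k+1⟩` with weight
`rn - k`, so every entry of row `n` is multiplied by `1 + rn` in total.
-/

section EulerianR

variable {r : ℕ}

theorem eulerianR_succ_zero (n : ℕ) : eulerianR r (n + 1) 0 = eulerianR r n 0 := by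
  simp [eulerianR]

theorem eulerianR_succ_succ (n k : ℕ) :
    eulerianR r (n + 1) (k + 1) =
      ((k : ℤ) + 2) * eulerianR r n (k + 1) + ((r : ℤ) * n - k) * eulerianR r n k := by
  simp only [eulerianR, Nat.add_sub_cancel, if_neg (Nat.succ_ne_zero k)]
  push_cast
  ring

theorem eulerianR_eq_zero_of_le {n k : ℕ} (hnk : n ≤ k) (hk : k ≠ 0) :
    eulerianR r n k = 0 := by
  induction n generalizing k with
  | zero => simp [eulerianR, hk]
  | succ n ih =>
    obtain ⟨k, rfl⟩ := Nat.exists_eq_succ_of_ne_zero hk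
    rcases Nat.eq_zero_or_pos k with rfl | hk0
    · obtain rfl : n = 0 := by omega
      simp [eulerianR]
    · rw [eulerianR_succ_succ, ih (by omega) (by omega), ih (by omega) hk0.ne']
      ring

theorem eulerianR_succ_self (n : ℕ) :
    eulerianR r (n + 1) n = ∏ j ∈ Finset.range (n + 1), (1 + (j : ℤ) * ((r : ℤ) - 1)) := by
  induction n with
  | zero => simp [eulerianR]
  | succ n ih =>
    rw [eulerianR_succ_succ, eulerianR_eq_zero_of_le le_rfl n.succ_ne_zero, ih,
      Finset.prod_range_succ _ (n + 1)]
    push_cast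
    ring

theorem sum_range_eulerianR (n : ℕ) :
    ∑ k ∈ Finset.range (n + 1), eulerianR r n k =
      ∏ j ∈ Finset.range n, (1 + (j : ℤ) * (r : ℤ)) := by
  induction n with
  | zero => simp [eulerianR]
  | succ n ih =>
    have hvanish : eulerianR r n (n + 1) = 0 := eulerianR_eq_zero_of_le (by omega) n.succ_ne_zero
    calc ∑ k ∈ Finset.range (n + 2), eulerianR r (n + 1) k
        = eulerianR r n 0 + ∑ k ∈ Finset.range (n + 1),
            (((k : ℤ) + 2) * eulerianR r n (k + 1) + ((r : ℤ) * n - k) * eulerianR r n k) := by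
          rw [Finset.sum_range_succ', eulerianR_succ_zero, add_comm]
          simp only [eulerianR_succ_succ]
      _ = ∑ k ∈ Finset.range (n + 1), ((k : ℤ) + 1) * eulerianR r n k
            + ∑ k ∈ Finset.range (n + 1), ((r : ℤ) * n - k) * eulerianR r n k := by
          rw [Finset.sum_add_distrib, ← add_assoc]
          congr 1
          rw [Finset.sum_range_succ' (fun k => ((k : ℤ) + 1) * eulerianR r n k),
            Finset.sum_range_succ, hvanish]
          push_cast
          ring_nf
      _ = (1 + (n : ℤ) * r) * ∑ k ∈ Finset.range (n + 1), eulerianR r n k := by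
          rw [← Finset.sum_add_distrib, Finset.mul_sum]
          exact Finset.sum_congr rfl fun k _ => by ring
      _ = ∏ j ∈ Finset.range (n + 1), (1 + (j : ℤ) * (r : ℤ)) := by
          rw [ih, Finset.prod_range_succ, mul_comm]

end EulerianR

theorem stmt_13_general (r : ℕ) (n : ℕ) :
    (1 ≤ n → eulerianR r n (n - 1)
        = ∏ j ∈ Finset.range n, (1 + (j : ℤ) * ((r : ℤ) - 1)))
    ∧ (∑ k ∈ Finset.range (n + 1), eulerianR r n k)
        = ∏ j ∈ Finset.range n, (1 + (j : ℤ) * (r : ℤ)) :=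
  ⟨fun hn => by
    obtain ⟨m, rfl⟩ := Nat.exists_eq_add_of_le' hn
    exact eulerianR_succ_self m, sum_range_eulerianR n⟩

/-- The `r`-th order Eulerian numbers satisfy
(i) `⟨n,n-1⟩^{(r)} = F_n^{(r-1)}` (for `n ≥ 1`) and
(ii) `Σ_{k=0}^n ⟨n,k⟩^{(r)} = F_n^{(r)}`, where `F_n^{(s)} = ∏_{j=0}^{n-1} (1+js)`. -/
theorem stmt_13 (r : ℕ) (hr : 1 ≤ r) (n : ℕ) :
    (1 ≤ n → eulerianR r n (n - 1)
        = ∏ j ∈ Finset.range n, (1 + (j : ℤ) * ((r : ℤ) - 1)))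
    ∧ (∑ k ∈ Finset.range (n + 1), eulerianR r n k)
        = ∏ j ∈ Finset.range n, (1 + (j : ℤ) * (r : ℤ)) :=
  stmt_13_general r n
end

section
/- For the lower-triangular Toeplitz matrix T_ξ with entries (T_ξ)_{ℓk} = ξ^{ℓ-k} for ℓ ≥ k and 0 otherwise (ξ an element of a commutative ring), every minor of T_ξ is either 0 or a power of ξ. Consequently, if ξ ≥ 0 in a partially ordered commutative ring, then T_ξ is totally positive (all minors are nonnegative). -/
/-- The minor of an infinite matrix `M : ℕ → ℕ → R` with rows `f 0 < f 1 < ⋯`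
and columns `g 0 < g 1 < ⋯` (for strictly monotone `f, g`). -/
noncomputable def submatrixDet {R : Type*} [CommRing R] (M : ℕ → ℕ → R) {k : ℕ}
    (f g : Fin k → ℕ) : R :=
  Matrix.det (Matrix.of fun i j => M (f i) (g j))

/-- The lower-triangular Toeplitz matrix of powers of `ξ`:
`(T_ξ)_{ℓk} = ξ^{ℓ-k}` for `ℓ ≥ k`, and `0` otherwise. -/
def toeplitzPow {R : Type*} [CommRing R] (ξ : R) : ℕ → ℕ → R :=
  fun ℓ k => if k ≤ ℓ then ξ ^ (ℓ - k) else 0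

/-!
Subtracting `ξ ^ (f i - f (i - 1))` times row `i - 1` from row `i` of the minor, for all `i > 0`
at once, multiplies it by a unitriangular matrix and leaves in row `i` only the entries
`ξ ^ (f i - g j)` with `f (i - 1) < g j ≤ f i`. In the reduced matrix the nonzero entries move weakly downwards from left
to right, so the only permutation contributing to the Leibniz expansion is the identity, and the
determinant is the product of the diagonal entries, each `0` or a power of `ξ`.
-/

namespace Matrix

variable {R n : Type*} [CommRing R] [Fintype n] [LinearOrder n] [DecidableEq n]

theorem det_eq_prod_diag_of_support_monotone (M : Matrix n n R)
    (hM : ∀ i i' j j', i < i' → j' < j → M i j = 0 ∨ M i' j' = 0) :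
    M.det = ∏ i, M i i := by
  rw [det_apply]
  refine (Finset.sum_eq_single 1 (fun σ _ hσ ↦ ?_) (by simp)).trans (by simp)
  suffices ∃ j, M (σ j) j = 0 by
    obtain ⟨j, hj⟩ := this
    rw [Finset.prod_eq_zero (Finset.mem_univ j) (f := fun i ↦ M (σ i) i) hj, smul_zero]
  by_contra! hσ_ne
  have hσ_mono : StrictMono σ := by
    refine fun j j' hjj' ↦ lt_of_not_ge fun hle ↦ ?_
    have hlt : σ j' < σ j := hle.lt_of_ne (σ.injective.ne hjj'.ne')
    exact (hM _ _ _ _ hlt hjj').elim (hσ_ne j') (hσ_ne j)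
  exact hσ (Equiv.ext fun j ↦ hσ_mono.apply_eq)

end Matrix

open Matrix

section toeplitzPow

variable {R : Type*} [CommRing R]

/-- `∀ i' < i, f i' < g j` stands for `f (i - 1) < g j`, and is vacuous in row `0`. -/
def toeplitzPowReduced (ξ : R) {k : ℕ} (f g : Fin k → ℕ) : Matrix (Fin k) (Fin k) R :=
  of fun i j ↦ if (∀ i' < i, f i' < g j) ∧ g j ≤ f i then ξ ^ (f i - g j) else 0

theorem submatrixDet_toeplitzPow_eq_det_reduced (ξ : R) {k : ℕ} (f g : Fin k → ℕ)
    (hf : StrictMono f) :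
    submatrixDet (toeplitzPow ξ) f g = (toeplitzPowReduced ξ f g).det := by
  cases k with
  | zero => simp [submatrixDet]
  | succ n =>
    refine det_eq_of_forall_row_eq_smul_add_pred (fun i ↦ ξ ^ (f i.succ - f i.castSucc))
      (fun j ↦ by simp [toeplitzPow, toeplitzPowReduced]) fun i j ↦ ?_
    have hfi : f i.castSucc < f i.succ := hf i.castSucc_lt_succ
    have hprev : (∀ i' < i.succ, f i' < g j) ↔ f i.castSucc < g j :=
      ⟨fun h ↦ h _ i.castSucc_lt_succ, fun h i' hi' ↦
        (hf.monotone (Fin.le_castSucc_iff.mpr hi')).trans_lt h⟩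
    simp only [toeplitzPow, toeplitzPowReduced, of_apply, hprev]
    by_cases h1 : g j ≤ f i.castSucc
    · rw [if_pos (h1.trans hfi.le), if_neg (by omega), if_pos h1, zero_add, ← pow_add]
      congr 1
      omega
    · by_cases h2 : g j ≤ f i.succ
      · rw [if_pos h2, if_pos ⟨by omega, h2⟩, if_neg h1, mul_zero, add_zero]
      · rw [if_neg h2, if_neg (by tauto), if_neg h1, mul_zero, add_zero]

theorem toeplitzPowReduced_support_monotone (ξ : R) {k : ℕ} (f g : Fin k → ℕ)
    (hg : StrictMono g) (i i' j j' : Fin k) (hi : i < i') (hj : j' < j) :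
    toeplitzPowReduced ξ f g i j = 0 ∨ toeplitzPowReduced ξ f g i' j' = 0 := by
  simp only [toeplitzPowReduced, of_apply, ite_eq_right_iff]
  by_contra! h
  obtain ⟨⟨-, hgf⟩, -⟩ := h.1
  obtain ⟨⟨hfg, -⟩, -⟩ := h.2
  exact (hg hj).not_ge ((hfg i hi).le.trans' hgf)

theorem submatrixDet_toeplitzPow_eq_zero_or_pow (ξ : R) {k : ℕ} (f g : Fin k → ℕ)
    (hf : StrictMono f) (hg : StrictMono g) :
    submatrixDet (toeplitzPow ξ) f g = 0 ∨ ∃ p : ℕ, submatrixDet (toeplitzPow ξ) f g = ξ ^ p := by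
  rw [submatrixDet_toeplitzPow_eq_det_reduced ξ f g hf,
    det_eq_prod_diag_of_support_monotone _ (toeplitzPowReduced_support_monotone ξ f g hg)]
  simp only [toeplitzPowReduced, of_apply, Fintype.prod_ite_zero, Finset.prod_pow_eq_pow_sum]
  split_ifs
  exacts [Or.inr ⟨_, rfl⟩, Or.inl rfl]

end toeplitzPow

/-- Every minor of `T_ξ` is either `0` or a power of `ξ`; consequently, if `ξ ≥ 0`
in a partially ordered commutative ring, then `T_ξ` is totally positive. -/
theorem stmt_14 {R : Type*} [CommRing R] [PartialOrder R] [IsOrderedRing R] (ξ : R) :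
    (∀ (k : ℕ) (f g : Fin k → ℕ), StrictMono f → StrictMono g →
        submatrixDet (toeplitzPow ξ) f g = 0
          ∨ ∃ p : ℕ, submatrixDet (toeplitzPow ξ) f g = ξ ^ p)
    ∧ (0 ≤ ξ → ∀ (k : ℕ) (f g : Fin k → ℕ), StrictMono f → StrictMono g →
        0 ≤ submatrixDet (toeplitzPow ξ) f g) := by
  refine ⟨fun _ f g hf hg ↦ submatrixDet_toeplitzPow_eq_zero_or_pow ξ f g hf hg,
    fun hξ _ f g hf hg ↦ ?_⟩
  obtain h | ⟨p, h⟩ := submatrixDet_toeplitzPow_eq_zero_or_pow ξ f g hf hg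
  · exact h.ge
  · exact h ▸ pow_nonneg hξ p
end

section
/- Let A be a matrix over a partially ordered commutative ring all of whose nonzero entries lie on two consecutive diagonals (i.e., A is bidiagonal). Then A is totally positive if and only if all its entries are nonnegative; indeed every nonzero minor of A is a product of entries of A. -/
def OnTwoDiagonals {R : Type*} [Zero R] (A : ℕ → ℕ → R) (d : ℤ) : Prop :=
  ∀ i j : ℕ, A i j ≠ 0 → (j : ℤ) - (i : ℤ) = d ∨ (j : ℤ) - (i : ℤ) = d + 1

namespace Matrix

variable {R : Type*} [CommRing R] {n : ℕ}

theorem det_succ_of_col_zero_eq_zero (M : Matrix (Fin (n + 1)) (Fin (n + 1)) R)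
    (hM : ∀ i, i ≠ 0 → M i 0 = 0) : M.det = M 0 0 * (M.submatrix Fin.succ Fin.succ).det := by
  rw [det_succ_column_zero, Fin.sum_univ_succ,
    Finset.sum_eq_zero fun i _ => by rw [hM i.succ (Fin.succ_ne_zero i), mul_zero, zero_mul]]
  simp

theorem det_succ_of_row_zero_eq_zero (M : Matrix (Fin (n + 1)) (Fin (n + 1)) R)
    (hM : ∀ j, j ≠ 0 → M 0 j = 0) : M.det = M 0 0 * (M.submatrix Fin.succ Fin.succ).det := by
  rw [← det_transpose, det_succ_of_col_zero_eq_zero Mᵀ hM, transpose_apply,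
    ← transpose_submatrix, det_transpose]

end Matrix

namespace OnTwoDiagonals

variable {R : Type*} [CommRing R] {A : ℕ → ℕ → R} {d : ℤ} {k : ℕ} {f g : Fin (k + 1) → ℕ}

theorem submatrixDet_eq_zero_or_eq_mul_tail (hA : OnTwoDiagonals A d)
    (hf : StrictMono f) (hg : StrictMono g) :
    submatrixDet A f g = 0 ∨
      submatrixDet A f g = A (f 0) (g 0) * submatrixDet A (f ∘ Fin.succ) (g ∘ Fin.succ) := by
  have hf0 : ∀ i, f 0 ≤ f i := fun i => hf.monotone (Fin.zero_le i)
  have hg0 : ∀ j, g 0 ≤ g j := fun j => hg.monotone (Fin.zero_le j)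
  unfold submatrixDet
  rcases lt_trichotomy ((g 0 : ℤ) - f 0) d with hlt | hlow | hgt
  · refine Or.inl (Matrix.det_eq_zero_of_column_eq_zero 0 fun i => ?_)
    by_contra h
    have := hf0 i
    rcases hA _ _ h with h' | h' <;> omega
  · refine Or.inr (Matrix.det_succ_of_col_zero_eq_zero _ fun i hi => ?_)
    by_contra h
    have := hf (Fin.pos_of_ne_zero hi)
    rcases hA _ _ h with h' | h' <;> omega
  · by_cases hupp : (g 0 : ℤ) - f 0 = d + 1
    · refine Or.inr (Matrix.det_succ_of_row_zero_eq_zero _ fun j hj => ?_)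
      by_contra h
      have := hg (Fin.pos_of_ne_zero hj)
      rcases hA _ _ h with h' | h' <;> omega
    · refine Or.inl (Matrix.det_eq_zero_of_row_eq_zero 0 fun j => ?_)
      by_contra h
      have := hg0 j
      rcases hA _ _ h with h' | h' <;> omega

end OnTwoDiagonals

theorem OnTwoDiagonals.submatrixDet_eq_zero_or_eq_prod {R : Type*} [CommRing R]
    {A : ℕ → ℕ → R} {d : ℤ} (hA : OnTwoDiagonals A d) :
    ∀ {k : ℕ} {f g : Fin k → ℕ}, StrictMono f → StrictMono g →
      submatrixDet A f g = 0 ∨ submatrixDet A f g = ∏ i, A (f i) (g i)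
  | 0, f, g, _, _ => Or.inr (by simp [submatrixDet])
  | k + 1, f, g, hf, hg => by
    rcases hA.submatrixDet_eq_zero_or_eq_mul_tail hf hg with h0 | hmul
    · exact Or.inl h0
    rcases hA.submatrixDet_eq_zero_or_eq_prod (hf.comp Fin.strictMono_succ)
      (hg.comp Fin.strictMono_succ) with htail | htail
    · exact Or.inl (by rw [hmul, htail, mul_zero])
    · exact Or.inr (by rw [hmul, htail, Fin.prod_univ_succ]; rfl)

theorem submatrixDet_const {R : Type*} [CommRing R] (A : ℕ → ℕ → R) (i j : ℕ) :
    submatrixDet A (fun _ : Fin 1 => i) (fun _ => j) = A i j :=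
  Matrix.det_unique _

/-- If all nonzero entries of `A` lie on two consecutive diagonals, then `A` is
totally positive iff all its entries are nonnegative; indeed, every nonzero minor
of `A` is a product of entries of `A`. -/
theorem stmt_15 {R : Type*} [CommRing R] [PartialOrder R] [IsOrderedRing R] (A : ℕ → ℕ → R)
    (hband : ∃ d : ℤ, ∀ i j : ℕ, A i j ≠ 0 → ((j : ℤ) - (i : ℤ) = d ∨ (j : ℤ) - (i : ℤ) = d + 1)) :
    ((∀ (k : ℕ) (f g : Fin k → ℕ), StrictMono f → StrictMono g →
        0 ≤ submatrixDet A f g)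
      ↔ ∀ i j : ℕ, 0 ≤ A i j)
    ∧ ∀ (k : ℕ) (f g : Fin k → ℕ), StrictMono f → StrictMono g →
        submatrixDet A f g = 0 ∨
          ∃ l : List (ℕ × ℕ), submatrixDet A f g = (l.map fun p => A p.1 p.2).prod := by
  obtain ⟨d, hA⟩ := hband
  have hA : OnTwoDiagonals A d := hA
  refine ⟨⟨fun htp i j => ?_, fun hpos k f g hf hg => ?_⟩, fun k f g hf hg => ?_⟩
  · simpa only [submatrixDet_const] using
      htp 1 _ _ (Subsingleton.strictMono fun _ => i) (Subsingleton.strictMono fun _ => j)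
  · rcases hA.submatrixDet_eq_zero_or_eq_prod hf hg with h0 | hprod
    · exact h0.ge
    · exact hprod ▸ Finset.prod_nonneg fun i _ => hpos _ _
  · refine (hA.submatrixDet_eq_zero_or_eq_prod hf hg).imp_right fun hprod =>
      ⟨List.ofFn fun i => (f i, g i), ?_⟩
    rw [hprod, List.map_ofFn, List.prod_ofFn]
    rfl
end

section
/- Product of bidiagonal matrices with constant diagonals: for indeterminates x_0, x_1, ..., x_m and y, the product L(x_1)·L(x_2)⋯L(x_m)·U⋆(y, x_0) has (i,j) entry equal to e_{i-j+1}(x_0, x_1, ..., x_m) when j ≥ 1, and y·e_i(x_1,...,x_m) when j = 0. Here L(s) is the lower-bidiagonal matrix with 1 on the diagonal and constant s on the subdiagonal; U⋆(y, x_0) is the upper-bidiagonal matrix with 1 on the superdiagonal and diagonal (y, x_0, x_0, x_0, ...); and e_k denotes the elementary symmetric polynomial (e_k := 0 for k < 0). -/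
/-- Product of infinite matrices (well-defined on banded matrices via `finsum`). -/
noncomputable def matMul {R : Type*} [CommRing R] (A B : ℕ → ℕ → R) : ℕ → ℕ → R :=
  fun i j => ∑ᶠ k : ℕ, A i k * B k j

/-- The lower-bidiagonal matrix `L(s)` with `1` on the diagonal and constant `s`
on the subdiagonal. -/
def Lmat {R : Type*} [CommRing R] (s : R) : ℕ → ℕ → R :=
  fun i j => if i = j then 1 else if i = j + 1 then s else 0

/-- The upper-bidiagonal matrix `U⋆(y, x₀)` with `1` on the superdiagonal and
diagonal `(y, x₀, x₀, x₀, …)`. -/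
def Ustar {R : Type*} [CommRing R] (y x0 : R) : ℕ → ℕ → R :=
  fun i j => if j = i + 1 then 1 else if i = j then (if i = 0 then y else x0) else 0

/-- The elementary symmetric polynomial `e_k` of the entries of a list. -/
def esymmList {R : Type*} [CommRing R] (l : List R) (k : ℕ) : R :=
  ((List.sublistsLen k l).map List.prod).sum

/-!
Left multiplication by `L(s)` adds `s` times row `i` to row `i + 1`. On the claimed entries this
is the recurrence `e_{k+1}(s, x₀, …) = e_{k+1}(x₀, …) + s e_k(x₀, …)`, so the formula holds for a
product `L(s₁)⋯L(s_m)·U⋆(y, x₀)` with arbitrary entries, by induction on the number of factors `L`.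
-/

section
variable {R : Type*} [CommRing R]

theorem esymmList_eq_multiset_esymm (l : List R) (k : ℕ) :
    esymmList l k = (l : Multiset R).esymm k := by
  simp [esymmList, Multiset.esymm, Multiset.powersetCard_coe, Function.comp_def]

theorem List.Perm.esymmList_eq {l l' : List R} (h : l.Perm l') (k : ℕ) :
    esymmList l k = esymmList l' k := by
  simp only [esymmList_eq_multiset_esymm, Multiset.coe_eq_coe.mpr h]

@[simp] theorem esymmList_zero (l : List R) : esymmList l 0 = 1 := by simp [esymmList]

theorem esymmList_nil (k : ℕ) : esymmList ([] : List R) k = if k = 0 then 1 else 0 := by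
  cases k <;> simp [esymmList]

theorem esymmList_cons_succ (a : R) (l : List R) (k : ℕ) :
    esymmList (a :: l) (k + 1) = esymmList l (k + 1) + a * esymmList l k := by
  simp [esymmList, List.sublistsLen_succ_cons, Function.comp_def, List.sum_map_mul_left]

theorem esymmList_singleton (a : R) (k : ℕ) :
    esymmList [a] k = if k = 0 then 1 else if k = 1 then a else 0 := by
  rcases k with _ | _ | k <;> simp [esymmList_cons_succ, esymmList_nil]

theorem matMul_Lmat_zero (s : R) (A : ℕ → ℕ → R) (j : ℕ) : matMul (Lmat s) A 0 j = A 0 j := by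
  rw [matMul, finsum_eq_single _ 0 fun k hk => by simp [Lmat, Ne.symm hk]]
  simp [Lmat]

theorem matMul_Lmat_succ (s : R) (A : ℕ → ℕ → R) (i j : ℕ) :
    matMul (Lmat s) A (i + 1) j = A (i + 1) j + s * A i j := by
  rw [matMul, finsum_eq_finsetSum_of_support_subset (s := {i + 1, i}), Finset.sum_pair (by omega)]
  · simp [Lmat]
  · refine Function.support_subset_iff'.mpr fun k hk => ?_
    simp only [Finset.coe_insert, Finset.coe_singleton, Set.mem_insert_iff,
      Set.mem_singleton_iff, not_or] at hk
    simp [Lmat, Ne.symm hk.1, Ne.symm hk.2]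

theorem foldr_matMul_Lmat_Ustar (l : List R) (y x0 : R) (i j : ℕ) :
    (l.map Lmat).foldr matMul (Ustar y x0) i j =
      if j = 0 then y * esymmList l i
      else if j ≤ i + 1 then esymmList (x0 :: l) (i + 1 - j) else 0 := by
  induction l generalizing i with
  | nil =>
    simp only [List.map_nil, List.foldr_nil, Ustar, esymmList_nil, esymmList_singleton]
    split_ifs <;> first | rfl | (exfalso; omega) | simp_all
  | cons a l ih =>
    rcases i with _ | i
    · rcases j with _ | _ | j <;> simp [matMul_Lmat_zero, ih]
    rw [List.map_cons, List.foldr_cons, matMul_Lmat_succ, ih, ih]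
    split_ifs
    · rw [esymmList_cons_succ]; ring
    · rw [(by omega : i + 1 + 1 - j = i + 1 - j + 1), (List.Perm.swap a x0 l).esymmList_eq,
        esymmList_cons_succ a]
    · rw [(by omega : i + 1 + 1 - j = 0)]; simp
    · omega
    · simp

end

/-- The product `L(x₁)⋯L(x_m)·U⋆(y, x₀)` has `(i,j)` entry `e_{i-j+1}(x₀,…,x_m)`
for `j ≥ 1` (zero when `i-j+1 < 0`), and `y·e_i(x₁,…,x_m)` for `j = 0`; here the
`x_t` and `y` are indeterminates. -/
theorem stmt_18 (m : ℕ) (i j : ℕ) :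
    (List.foldr matMul
        (Ustar (MvPolynomial.X (m + 1) : MvPolynomial ℕ ℚ) (MvPolynomial.X 0))
        ((List.range m).map fun t => Lmat (MvPolynomial.X (t + 1)))) i j
      = if j = 0 then
          MvPolynomial.X (m + 1)
            * esymmList (List.ofFn fun t : Fin m =>
                (MvPolynomial.X ((t : ℕ) + 1) : MvPolynomial ℕ ℚ)) i
        else if j ≤ i + 1 then
          esymmList (List.ofFn fun t : Fin (m + 1) =>
            (MvPolynomial.X (t : ℕ) : MvPolynomial ℕ ℚ)) (i + 1 - j)
        else 0 := by
  have hfactors : (List.range m).map (fun t => Lmat (MvPolynomial.X (t + 1))) =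
      (List.ofFn fun t : Fin m => (MvPolynomial.X ((t : ℕ) + 1) : MvPolynomial ℕ ℚ)).map Lmat := by
    rw [List.map_ofFn, List.ofFn_eq_map, ← List.map_coe_finRange_eq_range, List.map_map]
    rfl
  rw [hfactors, foldr_matMul_Lmat_Ustar, List.ofFn_succ]
  simp only [Fin.val_zero, Fin.val_succ]
end
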